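/- arXiv:2409.09897 — 4 statements merged into one kernel-verified Lean document; each statement's English description precedes it below -/
import Mathlib

section
/- For every A ∈ Sp(1,1) and every q in the quaternionic unit ball 𝔹, the denominator qc+d of the classical Möbius transformation F_A is nonzero, and F_A maps 𝔹 into 𝔹 (i.e. |(qc+d)^{-1}(qa+b)| < 1). -/
open Matrix Quaternion

noncomputable section

def J11 : Matrix (Fin 2) (Fin 2) ℍ[ℝ] := !![1,0;0,-1]

/-- `A` belongs to `Sp(1,1)`: 2×2 quaternionic matrices with `Aᴴ I₁,₁ A = I₁,₁`. -/
def Sp11 (A : Matrix (Fin 2) (Fin 2) ℍ[ℝ]) : Prop := Aᴴ * J11 * A = J11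

/-- Classical quaternionic Möbius transformation `F_A(q) = (qc+d)⁻¹(qa+b)` for
`A = [[a,c],[b,d]]`, i.e. `a = A 0 0`, `c = A 0 1`, `b = A 1 0`, `d = A 1 1`. -/
def mobius (A : Matrix (Fin 2) (Fin 2) ℍ[ℝ]) (q : ℍ[ℝ]) : ℍ[ℝ] :=
  (q * A 0 1 + A 1 1)⁻¹ * (q * A 0 0 + A 1 0)

/-- Left inverse implies right inverse for square quaternionic matrices. -/
lemma aux_mul_one_comm (A B : Matrix (Fin 2) (Fin 2) ℍ[ℝ]) (h : B * A = 1) :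
    A * B = 1 := by
  have hf : A.vecMulLinear * B.vecMulLinear = 1 := by
    apply LinearMap.ext; intro v
    show (v ᵥ* B) ᵥ* A = v
    rw [Matrix.vecMul_vecMul, h, Matrix.vecMul_one]
  have hg : B.vecMulLinear * A.vecMulLinear = 1 := mul_eq_one_comm.mp hf
  apply Matrix.ext; intro i j
  have h2 := LinearMap.ext_iff.mp hg (Pi.single i 1)
  rw [Module.End.mul_apply, Matrix.vecMulLinear_apply, Matrix.vecMulLinear_apply,
    Matrix.vecMul_vecMul, Module.End.one_apply, Matrix.single_one_vecMul] at h2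
  have h3 : (A * B) i j = _ := congrFun h2 j
  rw [h3, Matrix.one_apply, Pi.single_apply]
  simp [eq_comm]

lemma aux_expand (x u y : ℍ[ℝ]) :
    (x*u + y) * star (x*u + y)
      = x*(u*star u)*star x + x*(u*star y) + (y*star u)*star x + y*star y := by
  simp only [star_add, StarMul.star_mul]
  noncomm_ring

/-- For `A ∈ Sp(1,1)` and `q` in the unit ball, the denominator `qc+d` is nonzero
and `F_A` maps the ball into itself. -/
theorem stmt1 (A : Matrix (Fin 2) (Fin 2) ℍ[ℝ]) (hA : Sp11 A)
    (q : ℍ[ℝ]) (hq : ‖q‖ < 1) :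
    q * A 0 1 + A 1 1 ≠ 0 ∧ ‖mobius A q‖ < 1 := by
  set a := A 0 0 with ha
  set c := A 0 1 with hc
  set b := A 1 0 with hb
  set d := A 1 1 with hd
  have hJJ : J11 * J11 = 1 := by
    rw [J11, Matrix.mul_fin_two, Matrix.one_fin_two]
    norm_num
  have hBA : (J11 * Aᴴ * J11) * A = 1 := by
    have : (J11 * Aᴴ * J11) * A = J11 * (Aᴴ * J11 * A) := by
      simp only [Matrix.mul_assoc]
    rw [this, hA, hJJ]
  have hAB : A * (J11 * Aᴴ * J11) = 1 := aux_mul_one_comm _ _ hBA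
  have key : A * J11 * Aᴴ = J11 := by
    have h1 := congrArg (· * J11) hAB
    simp only [Matrix.mul_assoc, Matrix.one_mul] at h1 ⊢
    rw [hJJ, Matrix.mul_one] at h1
    exact h1
  have E : ∀ i j, (A * J11 * Aᴴ) i j = J11 i j := fun i j => congrFun (congrFun key i) j
  have E00 := E 0 0; have E01 := E 0 1; have E10 := E 1 0; have E11 := E 1 1
  simp only [Matrix.mul_apply, Fin.sum_univ_two, Matrix.conjTranspose_apply] at E00 E01 E10 E11
  simp only [J11, Matrix.cons_val', Matrix.cons_val_zero, Matrix.cons_val_one,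
    Matrix.head_cons, Matrix.empty_val', Matrix.cons_val_fin_one, Matrix.head_fin_const,
    Matrix.of_apply, mul_one, mul_zero, mul_neg, add_zero, zero_add,
    ← ha, ← hb, ← hc, ← hd] at E00 E01 E10 E11
  have h1 : a * star a = c * star c + 1 := by linear_combination (norm := noncomm_ring) E00
  have h2 : a * star b = c * star d := by linear_combination (norm := noncomm_ring) E01
  have h3 : b * star a = d * star c := by linear_combination (norm := noncomm_ring) E10
  have h4 : b * star b = d * star d + (-1) := by linear_combination (norm := noncomm_ring) E11
  have hid : (q*a + b) * star (q*a + b)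
      = (q*c + d) * star (q*c + d) + (q * star q - 1) := by
    rw [aux_expand q a b, aux_expand q c d, h1, h2, h3, h4]
    noncomm_ring
  have hreal : normSq (q*a + b) = normSq (q*c + d) + (normSq q - 1) := by
    rw [Quaternion.self_mul_star, Quaternion.self_mul_star, Quaternion.self_mul_star] at hid
    rw [← Quaternion.coe_inj]
    push_cast
    exact hid
  have hq2 : normSq q < 1 := by
    rw [Quaternion.normSq_eq_norm_mul_self]
    nlinarith [norm_nonneg q]
  have hden : q*c + d ≠ 0 := by
    intro h
    rw [h] at hreal
    rw [map_zero] at hreal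
    nlinarith [normSq_nonneg (a := q*a + b)]
  refine ⟨hden, ?_⟩
  have hnum : ‖q*a + b‖ < ‖q*c + d‖ := by
    rw [Quaternion.normSq_eq_norm_mul_self, Quaternion.normSq_eq_norm_mul_self] at hreal
    nlinarith [norm_nonneg (q*a + b), norm_nonneg (q*c + d), norm_pos_iff.mpr hden]
  rw [mobius, norm_mul, norm_inv, ← hc, ← hd, ← ha, ← hb, ← div_eq_inv_mul,
    div_lt_one (norm_pos_iff.mpr hden)]
  exact hnum
end
end

section
/- There is no group structure on the set ℳ(𝔹) of slice regular Möbius transformations such that the surjection Sp(1,1) → ℳ(𝔹), A ↦ ℱ_A, is a group homomorphism: equivalently, any surjective group homomorphism from Sp(1,1) whose fibers are exactly the left cosets A·Sp(1)I₂ would force Sp(1)·I₂ to be normal in Sp(1,1), which it is not. -/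
open Matrix Quaternion

noncomputable section

/-- The quaternion `i`. -/
def iq : ℍ[ℝ] := ⟨0,1,0,0⟩

/-- Witness matrix `A = [[1+i, i],[j, j-k]] ∈ Sp(1,1)`. -/
def MA : Matrix (Fin 2) (Fin 2) ℍ[ℝ] := !![⟨1,1,0,0⟩, ⟨0,1,0,0⟩; ⟨0,0,1,0⟩, ⟨0,0,1,-1⟩]

/-- `MB = MA⁻¹`. -/
def MB : Matrix (Fin 2) (Fin 2) ℍ[ℝ] := !![⟨1,-1,0,0⟩, ⟨0,0,1,0⟩; ⟨0,1,0,0⟩, ⟨0,0,-1,1⟩]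

/-- `MU = i • I₂`. -/
def MU : Matrix (Fin 2) (Fin 2) ℍ[ℝ] := !![iq, 0; 0, iq]

lemma qre_mul (a b : QuaternionAlgebra ℝ (-1) 0 (-1)) : (@HMul.hMul ℍ[ℝ] ℍ[ℝ] ℍ[ℝ] _ a b).re =
    a.re * b.re - a.imI * b.imI - a.imJ * b.imJ - a.imK * b.imK := Quaternion.re_mul a b
lemma qimI_mul (a b : QuaternionAlgebra ℝ (-1) 0 (-1)) : (@HMul.hMul ℍ[ℝ] ℍ[ℝ] ℍ[ℝ] _ a b).imI =
    a.re * b.imI + a.imI * b.re + a.imJ * b.imK - a.imK * b.imJ := Quaternion.imI_mul a b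
lemma qimJ_mul (a b : QuaternionAlgebra ℝ (-1) 0 (-1)) : (@HMul.hMul ℍ[ℝ] ℍ[ℝ] ℍ[ℝ] _ a b).imJ =
    a.re * b.imJ - a.imI * b.imK + a.imJ * b.re + a.imK * b.imI := Quaternion.imJ_mul a b
lemma qimK_mul (a b : QuaternionAlgebra ℝ (-1) 0 (-1)) : (@HMul.hMul ℍ[ℝ] ℍ[ℝ] ℍ[ℝ] _ a b).imK =
    a.re * b.imK + a.imI * b.imJ - a.imJ * b.imI + a.imK * b.re := Quaternion.imK_mul a b
lemma qstar (a b c d : ℝ) : @star ℍ[ℝ] _ (⟨a, b, c, d⟩ : QuaternionAlgebra ℝ (-1) 0 (-1)) =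
    (⟨a, -b, -c, -d⟩ : QuaternionAlgebra ℝ (-1) 0 (-1)) :=
  Quaternion.ext _ _ (by erw [Quaternion.re_star]) (by erw [Quaternion.imI_star])
    (by erw [Quaternion.imJ_star]) (by erw [Quaternion.imK_star])
lemma qzero_mul (b : QuaternionAlgebra ℝ (-1) 0 (-1)) :
    @HMul.hMul ℍ[ℝ] ℍ[ℝ] ℍ[ℝ] _ 0 b = 0 :=
  zero_mul (M₀ := ℍ[ℝ]) b
lemma qneg_mul (a b : QuaternionAlgebra ℝ (-1) 0 (-1)) :
    @HMul.hMul ℍ[ℝ] ℍ[ℝ] ℍ[ℝ] _ (@Neg.neg ℍ[ℝ] _ a) b = -(@HMul.hMul ℍ[ℝ] ℍ[ℝ] ℍ[ℝ] _ a b) :=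
  neg_mul (α := ℍ[ℝ]) a b

lemma qre_mul' (a : QuaternionAlgebra ℝ (-1) 0 (-1)) (b : ℍ[ℝ]) :
    (@HMul.hMul ℍ[ℝ] ℍ[ℝ] ℍ[ℝ] _ a b).re = a.re * b.re - a.imI * b.imI - a.imJ * b.imJ - a.imK * b.imK := Quaternion.re_mul a b
lemma qimI_mul' (a : QuaternionAlgebra ℝ (-1) 0 (-1)) (b : ℍ[ℝ]) :
    (@HMul.hMul ℍ[ℝ] ℍ[ℝ] ℍ[ℝ] _ a b).imI = a.re * b.imI + a.imI * b.re + a.imJ * b.imK - a.imK * b.imJ := Quaternion.imI_mul a b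
lemma qimJ_mul' (a : QuaternionAlgebra ℝ (-1) 0 (-1)) (b : ℍ[ℝ]) :
    (@HMul.hMul ℍ[ℝ] ℍ[ℝ] ℍ[ℝ] _ a b).imJ = a.re * b.imJ - a.imI * b.imK + a.imJ * b.re + a.imK * b.imI := Quaternion.imJ_mul a b
lemma qimK_mul' (a : QuaternionAlgebra ℝ (-1) 0 (-1)) (b : ℍ[ℝ]) :
    (@HMul.hMul ℍ[ℝ] ℍ[ℝ] ℍ[ℝ] _ a b).imK = a.re * b.imK + a.imI * b.imJ - a.imJ * b.imI + a.imK * b.re := Quaternion.imK_mul a b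
lemma qsmul (a b : QuaternionAlgebra ℝ (-1) 0 (-1)) :
    @HSMul.hSMul ℍ[ℝ] ℍ[ℝ] ℍ[ℝ] _ a b = @HMul.hMul ℍ[ℝ] ℍ[ℝ] ℍ[ℝ] _ a b := smul_eq_mul (α := ℍ[ℝ]) a b
lemma qzero_smul (b : QuaternionAlgebra ℝ (-1) 0 (-1)) :
    @HSMul.hSMul ℍ[ℝ] ℍ[ℝ] ℍ[ℝ] _ 0 b = 0 :=
  (smul_eq_mul (α := ℍ[ℝ]) 0 b).trans (zero_mul (M₀ := ℍ[ℝ]) b)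
lemma qre_neg (a : QuaternionAlgebra ℝ (-1) 0 (-1)) : (@Neg.neg ℍ[ℝ] _ a).re = -a.re := rfl
lemma qimI_neg (a : QuaternionAlgebra ℝ (-1) 0 (-1)) : (@Neg.neg ℍ[ℝ] _ a).imI = -a.imI := rfl
lemma qimJ_neg (a : QuaternionAlgebra ℝ (-1) 0 (-1)) : (@Neg.neg ℍ[ℝ] _ a).imJ = -a.imJ := rfl
lemma qimK_neg (a : QuaternionAlgebra ℝ (-1) 0 (-1)) : (@Neg.neg ℍ[ℝ] _ a).imK = -a.imK := rfl

lemma sp_mul {A B : Matrix (Fin 2) (Fin 2) ℍ[ℝ]} (hA : Sp11 A) (hB : Sp11 B) :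
    Sp11 (A * B) := by
  unfold Sp11 at *
  rw [Matrix.conjTranspose_mul]
  calc Bᴴ * Aᴴ * J11 * (A * B) = Bᴴ * (Aᴴ * J11 * A) * B := by
        simp only [mul_assoc]
    _ = Bᴴ * J11 * B := by rw [hA]
    _ = J11 := hB

lemma norm_iq : ‖iq‖ = 1 := by
  rw [norm_eq_sqrt_real_inner, inner_self]
  rw [Quaternion.normSq_def']; simp [iq]

lemma hMU : MU = iq • (1 : Matrix (Fin 2) (Fin 2) ℍ[ℝ]) := by
  unfold MU
  refine Matrix.ext fun i j => ?_
  fin_cases i <;> fin_cases j <;> simp [Matrix.one_apply]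

lemma spA : Sp11 MA := by
  unfold Sp11 MA J11
  refine Matrix.ext fun i j => ?_
  fin_cases i <;> fin_cases j <;>
    simp [Matrix.mul_apply, Fin.sum_univ_two, Matrix.conjTranspose_apply] <;>
    ext <;> simp [qzero_mul, qneg_mul, qstar, qre_mul, qimI_mul, qimJ_mul, qimK_mul] <;> norm_num

lemma spB : Sp11 MB := by
  unfold Sp11 MB J11
  refine Matrix.ext fun i j => ?_
  fin_cases i <;> fin_cases j <;>
    simp [Matrix.mul_apply, Fin.sum_univ_two, Matrix.conjTranspose_apply] <;>
    ext <;> simp [qzero_mul, qneg_mul, qstar, qre_mul, qimI_mul, qimJ_mul, qimK_mul] <;> norm_num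

lemma sp_one : Sp11 1 := by unfold Sp11; simp

lemma spU : Sp11 MU := by
  unfold Sp11 MU J11 iq
  refine Matrix.ext fun i j => ?_
  fin_cases i <;> fin_cases j <;>
    simp [Matrix.mul_apply, Fin.sum_univ_two, Matrix.conjTranspose_apply] <;>
    ext <;> simp [qzero_mul, qneg_mul, qstar, qre_mul, qimI_mul, qimJ_mul, qimK_mul] <;> norm_num

lemma hAB : MA * MB = 1 := by
  unfold MA MB
  refine Matrix.ext fun i j => ?_
  fin_cases i <;> fin_cases j <;>
    simp [Matrix.mul_apply, Fin.sum_univ_two, Matrix.one_apply] <;>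
    ext <;> simp [qzero_mul, qneg_mul, qre_mul, qimI_mul, qimJ_mul, qimK_mul] <;> norm_num

lemma hprod : MA * (MU * MB) = !![iq, 0; 0, -iq] := by
  unfold MA MB MU iq
  refine Matrix.ext fun i j => ?_
  fin_cases i <;> fin_cases j <;>
    simp [Matrix.mul_apply, Fin.sum_univ_two] <;>
    ext <;> simp [Matrix.vecHead, Matrix.vecTail, qsmul, qzero_smul, qre_neg, qimI_neg, qimJ_neg, qimK_neg, qre_mul', qimI_mul', qimJ_mul', qimK_mul', qzero_mul, qneg_mul, qre_mul, qimI_mul, qimJ_mul, qimK_mul] <;> norm_num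

/-- There is no group `G` and map `φ`, multiplicative and surjective on `Sp(1,1)`,
whose kernel (fiber of `1` in `Sp(1,1)`) is exactly `Sp(1)I₂`: such a kernel would be normal,
but `Sp(1)I₂` is not. -/
theorem stmt9 (G : Type*) [Group G] (φ : Matrix (Fin 2) (Fin 2) ℍ[ℝ] → G) :
    ¬ ((∀ A B : Matrix (Fin 2) (Fin 2) ℍ[ℝ], Sp11 A → Sp11 B → φ (A * B) = φ A * φ B) ∧
       (∀ g : G, ∃ A : Matrix (Fin 2) (Fin 2) ℍ[ℝ], Sp11 A ∧ φ A = g) ∧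
       (∀ A : Matrix (Fin 2) (Fin 2) ℍ[ℝ], Sp11 A →
          (φ A = 1 ↔ ∃ u : ℍ[ℝ], ‖u‖ = 1 ∧ A = u • (1 : Matrix (Fin 2) (Fin 2) ℍ[ℝ])))) := by
  rintro ⟨hmul, -, hker⟩
  -- φ 1 = 1
  have hφ1 : φ 1 = 1 := by
    have h := hmul 1 1 sp_one sp_one
    rw [one_mul] at h
    exact (mul_eq_left.mp h.symm)
  -- φ MU = 1 since MU = iq • I₂ is in the kernel
  have hφU : φ MU = 1 := (hker MU spU).mpr ⟨iq, norm_iq, hMU⟩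
  -- C := MA * (MU * MB) is in Sp(1,1)
  have hC : Sp11 (MA * (MU * MB)) := sp_mul spA (sp_mul spU spB)
  -- φ C = 1
  have hφC : φ (MA * (MU * MB)) = 1 := by
    rw [hmul MA (MU * MB) spA (sp_mul spU spB), hmul MU MB spU spB, hφU, one_mul,
      ← hmul MA MB spA spB, hAB, hφ1]
  -- hence C = v • I₂ for some unit quaternion v
  obtain ⟨v, -, hv⟩ := (hker _ hC).mp hφC
  rw [hprod] at hv
  -- but C = diag(i, -i) is not a quaternionic scalar matrix
  have h00 : iq = v := by
    have := congrFun (congrFun hv 0) 0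
    simpa [Matrix.one_apply] using this
  have h11 : -iq = v := by
    have := congrFun (congrFun hv 1) 1
    simpa [Matrix.one_apply] using this
  have : iq = -iq := h00.trans h11.symm
  have himI : (1 : ℝ) = -1 := congrArg QuaternionAlgebra.imI this
  norm_num at himI
end
end

section
/- The set ℳ(𝔹) of slice regular Möbius transformations of the unit ball is not closed under composition: there exist f, g ∈ ℳ(𝔹) with f∘g not slice regular. -/
open Matrix Quaternion

noncomputable section

/-- `f` is slice regular on the quaternionic unit ball: for every imaginary unit `I`
(`I² = -1`) and every `x + yI` in the ball, `(∂/∂x + I ∂/∂y) f(x + yI) = 0`. -/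
def SliceRegular (f : ℍ[ℝ] → ℍ[ℝ]) : Prop :=
  ∀ I : ℍ[ℝ], I ^ 2 = -1 → ∀ x y : ℝ, ‖(x : ℍ[ℝ]) + y • I‖ < 1 →
    fderiv ℝ (fun p : ℝ × ℝ => f ((p.1 : ℍ[ℝ]) + p.2 • I)) (x, y) (1, 0)
      + I * fderiv ℝ (fun p : ℝ × ℝ => f ((p.1 : ℍ[ℝ]) + p.2 • I)) (x, y) (0, 1) = 0

namespace Stmt11Aux

abbrev H := ℍ[ℝ]

def c : H := ((2⁻¹ : ℝ) : H)

def F (q : H) : H := (1 - q * c)⁻¹ * (c - q)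

def iH : H := ⟨0,1,0,0⟩
def jH : H := ⟨0,0,1,0⟩
def A0 : H := ⟨1, -(4⁻¹ : ℝ), 0, 0⟩
def B0 : H := ⟨16/17, 4/17, 0, 0⟩

def G (q : H) : H := q * iH

def D (q : H) : H →L[ℝ] H :=
  (1 - q * c)⁻¹ • (-(ContinuousLinearMap.id ℝ H)) +
    ContinuousLinearMap.smulRight
      (ContinuousLinearMap.comp
        (-(ContinuousLinearMap.mulLeftRight ℝ H (1 - q * c)⁻¹ (1 - q * c)⁻¹))
        (-(ContinuousLinearMap.smulRight (ContinuousLinearMap.id ℝ H) c))) (c - q)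

lemma hasFDerivAt_F {q : H} (hA : (1 : H) - q * c ≠ 0) : HasFDerivAt F (D q) q := by
  have h1 : HasFDerivAt (fun q : H => 1 - q * c)
      (-(ContinuousLinearMap.smulRight (ContinuousLinearMap.id ℝ H) c)) q :=
    ((hasFDerivAt_id q).mul_const' c).const_sub 1
  have h2 : HasFDerivAt (fun q : H => (1 - q * c)⁻¹)
      (ContinuousLinearMap.comp
        (-(ContinuousLinearMap.mulLeftRight ℝ H (1 - q * c)⁻¹ (1 - q * c)⁻¹))
        (-(ContinuousLinearMap.smulRight (ContinuousLinearMap.id ℝ H) c))) q :=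
    (hasFDerivAt_inv' hA).comp q h1
  have h3 : HasFDerivAt (fun q : H => c - q) (-(ContinuousLinearMap.id ℝ H)) q :=
    (hasFDerivAt_id q).const_sub c
  exact h2.mul' h3

lemma D_apply (q w : H) :
    D q w = (1 - q * c)⁻¹ * (-w) + ((1 - q*c)⁻¹ * (w * c) * (1 - q*c)⁻¹) * (c - q) := by
  simp [D, ContinuousLinearMap.mulLeftRight_apply, smul_eq_mul]

def L (I : H) : ℝ × ℝ →L[ℝ] H :=
  (ContinuousLinearMap.smulRight (ContinuousLinearMap.fst ℝ ℝ ℝ) (1 : H)) +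
  (ContinuousLinearMap.smulRight (ContinuousLinearMap.snd ℝ ℝ ℝ) I)

lemma L_apply (I : H) (p : ℝ × ℝ) : L I p = (p.1 : H) + p.2 • I := by
  simp [L]
  rw [← Quaternion.algebraMap_def, Algebra.algebraMap_eq_smul_one]

lemma hA_of_norm {q : H} (hq : ‖q‖ < 1) : (1 : H) - q * c ≠ 0 := by
  intro h
  rw [sub_eq_zero] at h
  have : ‖q * c‖ < 1 := by
    rw [norm_mul]
    have hc : ‖c‖ = 2⁻¹ := by simp [c]
    rw [hc]
    nlinarith [norm_nonneg q]
  rw [← h, norm_one] at this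
  exact lt_irrefl 1 this

lemma sliceRegular_F : SliceRegular F := by
  intro I hI x y hxy
  have hI' : I * I = -1 := by rw [← sq]; exact hI
  have hA : (1 : H) - ((x : H) + y • I) * c ≠ 0 := hA_of_norm hxy
  have hL0 : L I (x, y) = (x : H) + y • I := L_apply I (x, y)
  have hDF : HasFDerivAt (fun p : ℝ × ℝ => F ((p.1 : H) + p.2 • I))
      ((D ((x : H) + y • I)).comp (L I)) (x, y) := by
    have h0 : (fun p : ℝ × ℝ => F ((p.1 : H) + p.2 • I)) = fun p => F (L I p) := by
      funext p; rw [L_apply]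
    rw [h0, ← hL0]
    exact (hasFDerivAt_F (by rw [hL0]; exact hA)).comp (x, y) (L I).hasFDerivAt
  rw [hDF.fderiv]
  have e1 : ((D ((x : H) + y • I)).comp (L I)) (1, 0) = D ((x : H) + y • I) 1 := by
    simp [ContinuousLinearMap.comp_apply, L_apply]
  have e2 : ((D ((x : H) + y • I)).comp (L I)) (0, 1) = D ((x : H) + y • I) I := by
    simp [ContinuousLinearMap.comp_apply, L_apply]
  rw [e1, e2, D_apply, D_apply]
  set φ := Complex.liftAux I hI' with hφ
  have hq : ((x : H) + y • I) = φ (⟨x, y⟩ : ℂ) := by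
    simp [hφ, Complex.liftAux_apply, ← Quaternion.algebraMap_def]
  have hc : c = φ ((2⁻¹ : ℝ) : ℂ) := by
    simp [hφ, Complex.liftAux_apply, c, ← Quaternion.algebraMap_def]
  have hIφ : I = φ Complex.I := (Complex.liftAux_apply_I I hI').symm
  have hinv : ∀ z : ℂ, (φ z)⁻¹ = φ z⁻¹ := by
    intro z
    rcases eq_or_ne z 0 with rfl | hz
    · simp
    · exact inv_eq_of_mul_eq_one_right (by rw [← _root_.map_mul, mul_inv_cancel₀ hz, _root_.map_one])
  rw [hq, hc, hIφ]
  simp only [hinv, ← _root_.map_one φ, ← _root_.map_mul, ← _root_.map_sub, ← _root_.map_add,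
    ← _root_.map_neg]
  rw [← _root_.map_zero φ]
  congr 1
  linear_combination ((((2:ℝ)⁻¹ : ℝ) : ℂ) * (1 - (⟨x, y⟩ : ℂ) * (((2:ℝ)⁻¹ : ℝ) : ℂ))⁻¹ *
    (1 - (⟨x, y⟩ : ℂ) * (((2:ℝ)⁻¹ : ℝ) : ℂ))⁻¹ * ((((2:ℝ)⁻¹ : ℝ) : ℂ) - (⟨x, y⟩ : ℂ)) -
    (1 - (⟨x, y⟩ : ℂ) * (((2:ℝ)⁻¹ : ℝ) : ℂ))⁻¹) * Complex.I_mul_I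

lemma normSq_lt {q : H} (hq : ‖q‖ < 1) : normSq q < 1 := by
  have := normSq_eq_norm_mul_self q; nlinarith [norm_nonneg q]

lemma norm_lt_of_normSq {q : H} (h : normSq q < 1) : ‖q‖ < 1 := by
  have := normSq_eq_norm_mul_self q; nlinarith [norm_nonneg q]

lemma norm_F_lt {q : H} (hq : ‖q‖ < 1) : ‖F q‖ < 1 := by
  have hA := hA_of_norm hq
  have hApos : 0 < ‖(1:H) - q * c‖ := norm_pos_iff.mpr hA
  have key : ‖c - q‖ < ‖(1:H) - q * c‖ := by
    have h1 : ‖c - q‖ ^ 2 < ‖(1:H) - q * c‖ ^ 2 := by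
      rw [sq, sq, ← normSq_eq_norm_mul_self, ← normSq_eq_norm_mul_self]
      have hq2 : normSq q < 1 := normSq_lt hq
      rw [normSq_def'] at hq2 ⊢
      rw [normSq_def']
      have hcm : c = (⟨2⁻¹, 0, 0, 0⟩ : H) := rfl
      simp only [Quaternion.re_sub, Quaternion.imI_sub, Quaternion.imJ_sub, Quaternion.imK_sub, Quaternion.re_mul, Quaternion.imI_mul, Quaternion.imJ_mul, Quaternion.imK_mul, Quaternion.re_one, Quaternion.imI_one, Quaternion.imJ_one, Quaternion.imK_one]
      rw [hcm]
      simp [Quaternion.re_sub, Quaternion.imI_sub, Quaternion.imJ_sub, Quaternion.imK_sub,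
        Quaternion.re_mul, Quaternion.imI_mul, Quaternion.imJ_mul, Quaternion.imK_mul,
        Quaternion.re_one, Quaternion.imI_one, Quaternion.imJ_one, Quaternion.imK_one]
      nlinarith [hq2]
    exact lt_of_pow_lt_pow_left₀ 2 (le_of_lt hApos) h1
  rw [F, norm_mul, norm_inv]
  calc ‖(1:H) - q * c‖⁻¹ * ‖c - q‖ < ‖(1:H) - q * c‖⁻¹ * ‖(1:H) - q * c‖ :=
        mul_lt_mul_of_pos_left key (inv_pos.mpr hApos)
    _ = 1 := inv_mul_cancel₀ (ne_of_gt hApos)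

lemma F_F {q : H} (hq : ‖q‖ < 1) : F (F q) = q := by
  have hA := hA_of_norm hq
  have hc34 : (1 : H) - c * c = ((3/4 : ℝ) : H) := by
    rw [c, ← Quaternion.coe_mul, show (1:H) = ((1:ℝ):H) from rfl, ← Quaternion.coe_sub]
    norm_num
  have e1 : (1 : H) - F q * c = (1 - q * c)⁻¹ * ((3/4 : ℝ) : H) := by
    rw [F]
    calc (1 : H) - (1 - q * c)⁻¹ * (c - q) * c
        = (1 - q * c)⁻¹ * (1 - q * c) - (1 - q * c)⁻¹ * ((c - q) * c) := by
          rw [inv_mul_cancel₀ hA]; noncomm_ring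
      _ = (1 - q * c)⁻¹ * ((1 - q * c) - (c - q) * c) := by rw [← mul_sub]
      _ = (1 - q * c)⁻¹ * (((3/4 : ℝ) : H)) := by
          congr 1
          have : (1 : H) - q * c - (c - q) * c = 1 - c * c := by noncomm_ring
          rw [this, hc34]
  have e2 : c - F q = (1 - q * c)⁻¹ * (((3/4 : ℝ) : H) * q) := by
    rw [F]
    calc c - (1 - q * c)⁻¹ * (c - q)
        = (1 - q * c)⁻¹ * ((1 - q * c) * c) - (1 - q * c)⁻¹ * (c - q) := by
          rw [← mul_assoc, inv_mul_cancel₀ hA, one_mul]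
      _ = (1 - q * c)⁻¹ * ((1 - q * c) * c - (c - q)) := by rw [← mul_sub]
      _ = (1 - q * c)⁻¹ * (((3/4 : ℝ) : H) * q) := by
          congr 1
          have h1 : (1 - q * c) * c - (c - q) = q - q * (c * c) := by noncomm_ring
          have h2 : c * c = ((4⁻¹ : ℝ) : H) := by
            rw [c, ← Quaternion.coe_mul]; norm_num
          rw [h1, h2, Quaternion.mul_coe_eq_smul, Quaternion.coe_mul_eq_smul]
          module
  rw [show F (F q) = (1 - F q * c)⁻¹ * (c - F q) from rfl, e1, e2, _root_.mul_inv_rev, inv_inv,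
    ← Quaternion.coe_inv, mul_assoc, ← mul_assoc ((1 : H) - q * c), mul_inv_cancel₀ hA,
    one_mul, ← mul_assoc, ← Quaternion.coe_mul]
  norm_num

lemma bijOn_F : Set.BijOn F (Metric.ball (0 : H) 1) (Metric.ball (0 : H) 1) := by
  refine ⟨fun q hq => ?_, fun a ha b hb hab => ?_, fun t ht => ?_⟩
  · rw [mem_ball_zero_iff] at *
    exact norm_F_lt hq
  · rw [mem_ball_zero_iff] at ha hb
    calc a = F (F a) := (F_F ha).symm
      _ = F (F b) := by rw [hab]
      _ = b := F_F hb
  · rw [mem_ball_zero_iff] at ht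
    exact ⟨F t, mem_ball_zero_iff.mpr (norm_F_lt ht), F_F ht⟩

lemma iH_mul_iH : iH * iH = (-1 : H) := by
  ext <;> simp only [Quaternion.re_mul, Quaternion.imI_mul, Quaternion.imJ_mul, Quaternion.imK_mul] <;> simp [iH, Quaternion.ext_iff]

lemma jH_sq : jH ^ 2 = (-1 : H) := by
  rw [sq]; ext <;> simp only [Quaternion.re_mul, Quaternion.imI_mul, Quaternion.imJ_mul, Quaternion.imK_mul] <;> simp [jH, Quaternion.ext_iff]

lemma norm_iH : ‖iH‖ = 1 := by
  have h : normSq iH = 1 := by rw [normSq_def']; simp [iH]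
  have := normSq_eq_norm_mul_self iH
  nlinarith [norm_nonneg iH]

lemma bijOn_G : Set.BijOn G (Metric.ball (0 : H) 1) (Metric.ball (0 : H) 1) := by
  have hnorm : ∀ q : H, ‖G q‖ = ‖q‖ := by
    intro q; rw [G, norm_mul, norm_iH, mul_one]
  have hiH0 : iH ≠ 0 := by
    intro h
    have h2 := iH_mul_iH
    rw [h] at h2
    simp at h2
  refine ⟨fun q hq => ?_, fun a _ b _ hab => ?_, fun t ht => ?_⟩
  · rw [mem_ball_zero_iff] at *
    rw [hnorm]; exact hq
  · exact mul_right_cancel₀ hiH0 hab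
  · rw [mem_ball_zero_iff] at ht
    refine ⟨t * (-iH), mem_ball_zero_iff.mpr ?_, ?_⟩
    · rw [norm_mul, norm_neg, norm_iH, mul_one]; exact ht
    · show t * -iH * iH = t
      rw [mul_assoc, neg_mul, iH_mul_iH, neg_neg, mul_one]

def M : ℝ × ℝ →L[ℝ] H :=
  ContinuousLinearMap.comp
    (ContinuousLinearMap.smulRight (ContinuousLinearMap.id ℝ H) iH) (L jH)

lemma M_apply (p : ℝ × ℝ) : M p = ((p.1 : H) + p.2 • jH) * iH := by
  simp [M, L_apply, smul_eq_mul]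

lemma sliceRegular_G : SliceRegular G := by
  intro I hI x y _
  have hI' : I * I = -1 := by rw [← sq]; exact hI
  have hfun : (fun p : ℝ × ℝ => G ((p.1 : H) + p.2 • I)) =
      ⇑(ContinuousLinearMap.comp
        (ContinuousLinearMap.smulRight (ContinuousLinearMap.id ℝ H) iH) (L I)) := by
    funext p
    simp [G, L_apply, smul_eq_mul]
  rw [hfun, ContinuousLinearMap.fderiv]
  simp only [ContinuousLinearMap.comp_apply, L_apply, ContinuousLinearMap.smulRight_apply,
    ContinuousLinearMap.id_apply, smul_eq_mul]
  norm_num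
  rw [← mul_assoc, hI']
  simp

set_option maxHeartbeats 1000000 in
lemma not_sliceRegular_FG : ¬ SliceRegular (F ∘ G) := by
  intro h
  have hball : ‖((2⁻¹ : ℝ) : H) + (0 : ℝ) • jH‖ < 1 := by
    simp
    norm_num
  have heq := h jH jH_sq 2⁻¹ 0 hball
  have hq0 : ((2⁻¹ : ℝ) : H) * iH = M (2⁻¹, 0) := by
    rw [M_apply]; simp
  have hq0norm : ‖((2⁻¹ : ℝ) : H) * iH‖ < 1 := by
    rw [norm_mul, norm_iH, mul_one]
    simp; norm_num
  have hA0 : (1 : H) - (((2⁻¹ : ℝ) : H) * iH) * c ≠ 0 := hA_of_norm hq0norm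
  have hDF : HasFDerivAt (fun p : ℝ × ℝ => (F ∘ G) ((p.1 : H) + p.2 • jH))
      ((D (((2⁻¹ : ℝ) : H) * iH)).comp M) ((2⁻¹ : ℝ), (0 : ℝ)) := by
    have h0 : (fun p : ℝ × ℝ => (F ∘ G) ((p.1 : H) + p.2 • jH)) = fun p => F (M p) := by
      funext p; rw [M_apply]; rfl
    rw [h0, hq0]
    exact (hasFDerivAt_F (by rw [← hq0]; exact hA0)).comp _ M.hasFDerivAt
  rw [hDF.fderiv] at heq
  have e1 : ((D (((2⁻¹ : ℝ) : H) * iH)).comp M) (1, 0) = D (((2⁻¹ : ℝ) : H) * iH) iH := by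
    simp [ContinuousLinearMap.comp_apply, M_apply]
  have e2 : ((D (((2⁻¹ : ℝ) : H) * iH)).comp M) (0, 1) =
      D (((2⁻¹ : ℝ) : H) * iH) (jH * iH) := by
    simp [ContinuousLinearMap.comp_apply, M_apply]
  rw [e1, e2, D_apply, D_apply] at heq
  have hA0eq : (1 : H) - (((2⁻¹ : ℝ) : H) * iH) * c = A0 := by
    have hcm : ((2⁻¹ : ℝ) : H) = (⟨2⁻¹, 0, 0, 0⟩ : H) := rfl
    ext <;> simp only [Quaternion.re_sub, Quaternion.imI_sub, Quaternion.imJ_sub, Quaternion.imK_sub, Quaternion.re_mul, Quaternion.imI_mul, Quaternion.imJ_mul, Quaternion.imK_mul, Quaternion.re_one, Quaternion.imI_one, Quaternion.imJ_one, Quaternion.imK_one] <;> rw [c, hcm] <;> simp [iH, A0] <;> norm_num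
  have hB : A0⁻¹ = B0 := by
    apply inv_eq_of_mul_eq_one_right
    ext <;> simp only [Quaternion.re_mul, Quaternion.imI_mul, Quaternion.imJ_mul, Quaternion.imK_mul] <;> simp [A0, B0] <;> norm_num
  rw [hA0eq, hB] at heq
  have hcm : c = (⟨2⁻¹, 0, 0, 0⟩ : H) := rfl
  have h2m : ((2⁻¹ : ℝ) : H) = (⟨2⁻¹, 0, 0, 0⟩ : H) := rfl
  have hre := congrArg QuaternionAlgebra.re heq
  simp only [Quaternion.re_add, Quaternion.imI_add, Quaternion.imJ_add, Quaternion.imK_add,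
    Quaternion.re_neg, Quaternion.imI_neg, Quaternion.imJ_neg, Quaternion.imK_neg, Quaternion.re_sub, Quaternion.imI_sub, Quaternion.imJ_sub, Quaternion.imK_sub, Quaternion.re_mul, Quaternion.imI_mul, Quaternion.imJ_mul, Quaternion.imK_mul] at hre
  rw [hcm, h2m] at hre
  norm_num [iH, jH, B0, Quaternion.re_mul, Quaternion.imI_mul, Quaternion.imJ_mul,
    Quaternion.imK_mul, Quaternion.re_add, Quaternion.re_sub, Quaternion.re_neg] at hre

end Stmt11Aux

/-- The set of slice regular Möbius transformations of the ball (bijective slice regular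
self-maps of the ball) is not closed under composition. -/
theorem stmt11 :
    ∃ f g : ℍ[ℝ] → ℍ[ℝ],
      Set.BijOn f (Metric.ball (0 : ℍ[ℝ]) 1) (Metric.ball (0 : ℍ[ℝ]) 1) ∧ SliceRegular f ∧
      Set.BijOn g (Metric.ball (0 : ℍ[ℝ]) 1) (Metric.ball (0 : ℍ[ℝ]) 1) ∧ SliceRegular g ∧
      ¬ SliceRegular (f ∘ g) := by
  exact ⟨Stmt11Aux.F, Stmt11Aux.G, Stmt11Aux.bijOn_F, Stmt11Aux.sliceRegular_F,
    Stmt11Aux.bijOn_G, Stmt11Aux.sliceRegular_G, Stmt11Aux.not_sliceRegular_FG⟩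
end
end

section
/- The map (a,u) ↦ Sp(1)I₂ · ((1-|a|²)^{-1/2}[[1,-ā],[-a,1]]·diag(u,1)) from 𝔹 × Sp(1) to the coset space Sp(1)I₂\Sp(1,1) is a bijection; equivalently, every A ∈ Sp(1,1) can be written uniquely as A = (w I₂) · (1-|a|²)^{-1/2}[[1,-ā],[-a,1]] · diag(u,1) with w,u ∈ Sp(1) and a ∈ 𝔹. -/
open Matrix Quaternion

noncomputable section

theorem aux_smul_fin2 {R α : Type*} [SMul R α] (x : R) (a b c d : α) :
    x • !![a,b;c,d] = !![x•a, x•b; x•c, x•d] := by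
  ext i j; fin_cases i <;> fin_cases j <;> simp

theorem aux_prod_eq (w a u : ℍ[ℝ]) (r : ℝ) :
    (w • (1 : Matrix (Fin 2) (Fin 2) ℍ[ℝ])) * (r • !![(1 : ℍ[ℝ]), -star a; -a, 1])
        * !![u, 0; 0, 1]
      = !![r • (w * u), r • (w * -star a); r • (w * -a * u), r • w] := by
  rw [Matrix.smul_mul, Matrix.mul_smul, Matrix.smul_mul, one_mul, Matrix.smul_mul,
    Matrix.mul_fin_two, aux_smul_fin2, aux_smul_fin2]
  congr 1 <;> simp [smul_smul, mul_smul_comm, smul_comm, mul_assoc]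

theorem aux_beta (γ δ α β : ℍ[ℝ]) (hδ : δ ≠ 0) (h : star γ * α = star δ * β) :
    β = δ * (star γ * (star δ)⁻¹) * (δ⁻¹ * α) := by
  have hn : normSq δ ≠ 0 := normSq_ne_zero.2 hδ
  have hsδ : star δ ≠ 0 := star_ne_zero.2 hδ
  have hβ : β = (star δ)⁻¹ * (star γ * α) := by
    rw [h, inv_mul_cancel_left₀ hsδ]
  have hinv : δ⁻¹ = (normSq δ)⁻¹ • star δ := Quaternion.inv_def δ
  have hinvs : (star δ)⁻¹ = (normSq δ)⁻¹ • δ := by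
    rw [Quaternion.inv_def (star δ), star_star, normSq_star]
  rw [hβ, hinv, hinvs]
  simp only [smul_mul_assoc, mul_smul_comm, smul_smul]
  have key : δ * (star γ * δ) * (star δ * α) = normSq δ • (δ * (star γ * α)) := by
    have h2 : δ * (star γ * δ) * (star δ * α) = δ * star γ * (δ * star δ) * α := by
      simp only [mul_assoc]
    rw [h2, self_mul_star, mul_coe_eq_smul]
    simp only [smul_mul_assoc, mul_assoc]
  rw [key, smul_smul]
  congr 1
  field_simp

set_option maxHeartbeats 1600000 in
/-- Every `A ∈ Sp(1,1)` decomposes uniquely as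
`A = (w I₂) · (1-|a|²)^(-1/2) [[1, -conj a],[-a, 1]] · diag(u, 1)` with `w, u` unit
quaternions and `a` in the ball; i.e. `(a,u) ↦ Sp(1)I₂ · (...)` is a bijection of
`𝔹 × Sp(1)` onto `Sp(1)I₂ \ Sp(1,1)`. -/
theorem stmt19 (A : Matrix (Fin 2) (Fin 2) ℍ[ℝ]) (hA : Sp11 A) :
    ∃! t : ℍ[ℝ] × ℍ[ℝ] × ℍ[ℝ],
      ‖t.1‖ = 1 ∧ ‖t.2.1‖ < 1 ∧ ‖t.2.2‖ = 1 ∧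
      A = (t.1 • (1 : Matrix (Fin 2) (Fin 2) ℍ[ℝ]))
            * ((Real.sqrt (1 - ‖t.2.1‖ ^ 2))⁻¹ • !![(1 : ℍ[ℝ]), -star t.2.1; -t.2.1, 1])
            * !![t.2.2, 0; 0, 1] := by
  have h := Matrix.ext_iff.2 hA
  have h00 := h 0 0
  have h01 := h 0 1
  have h10 := h 1 0
  have h11 := h 1 1
  simp [J11, Sp11, Matrix.mul_apply, Fin.sum_univ_two, Matrix.conjTranspose_apply]
    at h00 h01 h10 h11
  rw [star_mul_self, star_mul_self] at h00 h11
  have e1 : normSq (A 0 0) + -(normSq (A 1 0)) = 1 :=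
    Quaternion.coe_injective (by push_cast; exact h00)
  have e2 : normSq (A 0 1) + -(normSq (A 1 1)) = -1 :=
    Quaternion.coe_injective (by push_cast; exact h11)
  have h01' : star (A 0 0) * A 0 1 = star (A 1 0) * A 1 1 := by
    rwa [add_neg_eq_zero] at h01
  have h10' : star (A 0 1) * A 0 0 = star (A 1 1) * A 1 0 := by
    rwa [add_neg_eq_zero] at h10
  have e3 : normSq (A 0 0) * normSq (A 0 1) = normSq (A 1 0) * normSq (A 1 1) := by
    have := congrArg normSq h01'
    simpa only [_root_.map_mul, normSq_star] using this
  have e4 : normSq (A 1 0) = normSq (A 0 1) := by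
    nlinarith [normSq_nonneg (a := A 1 0), normSq_nonneg (a := A 0 1)]
  have e5 : normSq (A 1 1) = 1 + normSq (A 0 1) := by nlinarith
  have e6 : normSq (A 0 0) = normSq (A 1 1) := by nlinarith
  have hδpos : (0 : ℝ) < normSq (A 1 1) := by nlinarith [normSq_nonneg (a := A 0 1)]
  have hδ : A 1 1 ≠ 0 := normSq_ne_zero.1 hδpos.ne'
  have nsq : ∀ x : ℍ[ℝ], ‖x‖ ^ 2 = normSq x := fun x => by
    rw [sq, normSq_eq_norm_mul_self]
  have hnd : ‖A 1 1‖ ≠ 0 := norm_ne_zero_iff.2 hδ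
  have hndpos : 0 < ‖A 1 1‖ := norm_pos_iff.2 hδ
  have hd2 : ‖A 1 1‖ ^ 2 = 1 + ‖A 0 1‖ ^ 2 := by rw [nsq, nsq]; exact e5
  have hαδ : ‖A 0 0‖ = ‖A 1 1‖ := by
    have h2 : ‖A 0 0‖ * ‖A 0 0‖ = ‖A 1 1‖ * ‖A 1 1‖ := by
      rw [← normSq_eq_norm_mul_self, ← normSq_eq_norm_mul_self]; exact e6
    have := congrArg Real.sqrt h2
    rwa [Real.sqrt_mul_self (norm_nonneg _), Real.sqrt_mul_self (norm_nonneg _)] at this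
  set w₀ : ℍ[ℝ] := (‖A 1 1‖⁻¹ : ℝ) • A 1 1 with hw₀
  set a₀ : ℍ[ℝ] := -star (A 0 1) * (star (A 1 1))⁻¹ with ha₀
  set u₀ : ℍ[ℝ] := (A 1 1)⁻¹ * A 0 0 with hu₀
  have hna : ‖a₀‖ = ‖A 0 1‖ * ‖A 1 1‖⁻¹ := by
    rw [ha₀, norm_mul, norm_neg, norm_star, norm_inv, norm_star]
  have hlt : ‖A 0 1‖ < ‖A 1 1‖ := by nlinarith [norm_nonneg (A 0 1), norm_nonneg (A 1 1)]
  have ha01 : ‖a₀‖ < 1 := by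
    rw [hna]
    calc ‖A 0 1‖ * ‖A 1 1‖⁻¹ < ‖A 1 1‖ * ‖A 1 1‖⁻¹ :=
          mul_lt_mul_of_pos_right hlt (inv_pos.2 hndpos)
      _ = 1 := mul_inv_cancel₀ hnd
  have hs : Real.sqrt (1 - ‖a₀‖ ^ 2) = ‖A 1 1‖⁻¹ := by
    have h1 : 1 - ‖a₀‖ ^ 2 = (‖A 1 1‖⁻¹) ^ 2 := by
      have hc : (‖A 1 1‖ ^ 2 - 1) * (‖A 1 1‖ ^ 2)⁻¹ = 1 - (‖A 1 1‖ ^ 2)⁻¹ := by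
        rw [sub_mul, mul_inv_cancel₀ (pow_ne_zero 2 hnd), one_mul]
      have hγ2 : ‖A 0 1‖ ^ 2 = ‖A 1 1‖ ^ 2 - 1 := by linarith
      rw [hna, mul_pow, hγ2, inv_pow, hc]
      ring
    rw [h1, Real.sqrt_sq (by positivity)]
  have hs' : (Real.sqrt (1 - ‖a₀‖ ^ 2))⁻¹ = ‖A 1 1‖ := by rw [hs, inv_inv]
  have hsa : -star a₀ = (A 1 1)⁻¹ * A 0 1 := by
    rw [ha₀, StarMul.star_mul, star_inv₀, star_star, star_neg, star_star, mul_neg, neg_neg]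
  have E11 : A 1 1 = ‖A 1 1‖ • w₀ := by
    rw [hw₀, smul_smul, mul_inv_cancel₀ hnd, one_smul]
  have E00 : A 0 0 = ‖A 1 1‖ • (w₀ * u₀) := by
    rw [hw₀, hu₀, smul_mul_assoc, smul_smul, mul_inv_cancel₀ hnd, one_smul,
      mul_inv_cancel_left₀ hδ]
  have E01 : A 0 1 = ‖A 1 1‖ • (w₀ * -star a₀) := by
    rw [hsa, hw₀, smul_mul_assoc, smul_smul, mul_inv_cancel₀ hnd, one_smul,
      mul_inv_cancel_left₀ hδ]
  have E10 : A 1 0 = ‖A 1 1‖ • (w₀ * -a₀ * u₀) := by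
    have hma : -a₀ = star (A 0 1) * (star (A 1 1))⁻¹ := by rw [ha₀, neg_mul, neg_neg]
    rw [hma, hw₀, hu₀, smul_mul_assoc, smul_mul_assoc, smul_smul, mul_inv_cancel₀ hnd,
      one_smul]
    exact aux_beta (A 0 1) (A 1 1) (A 0 0) (A 1 0) hδ h10'
  refine ⟨⟨w₀, a₀, u₀⟩, ⟨?_, ha01, ?_, ?_⟩, ?_⟩
  · rw [hw₀, norm_smul, Real.norm_eq_abs, abs_of_nonneg (by positivity),
      inv_mul_cancel₀ hnd]
  · rw [hu₀, norm_mul, norm_inv, hαδ, inv_mul_cancel₀ hnd]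
  · show A = _
    dsimp only
    rw [hs', aux_prod_eq]
    conv_lhs => rw [Matrix.eta_fin_two A, E11, E00, E01, E10]
  · rintro ⟨w, a, u⟩ ⟨hw, ha1, hu, hEq⟩
    have hspos : 0 < Real.sqrt (1 - ‖a‖ ^ 2) :=
      Real.sqrt_pos.2 (by nlinarith [norm_nonneg a])
    set s : ℝ := Real.sqrt (1 - ‖a‖ ^ 2) with hsdef
    have hs0 : s ≠ 0 := hspos.ne'
    rw [aux_prod_eq] at hEq
    have hE11 : A 1 1 = s⁻¹ • w := by rw [hEq]; simp
    have hE01x : A 0 1 = s⁻¹ • (w * -star a) := by rw [hEq]; simp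
    have hE00x : A 0 0 = s⁻¹ • (w * u) := by rw [hEq]; simp
    have hnδs : ‖A 1 1‖ = s⁻¹ := by
      rw [hE11, norm_smul, Real.norm_eq_abs, abs_of_nonneg (by positivity), hw, mul_one]
    have hwca : w = w₀ := by
      rw [hw₀, hnδs, hE11, smul_smul, inv_inv, mul_inv_cancel₀ hs0, one_smul]
    have hE01' : A 0 1 = A 1 1 * -star a := by
      rw [hE11, hE01x, smul_mul_assoc]
    have hstar : star a = -((A 1 1)⁻¹ * A 0 1) := by
      rw [hE01', mul_neg, mul_neg, neg_neg, inv_mul_cancel_left₀ hδ]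
    have haca : a = a₀ := by
      calc a = star (star a) := (star_star a).symm
        _ = -(star (A 0 1) * star ((A 1 1)⁻¹)) := by
              rw [hstar, star_neg, StarMul.star_mul]
        _ = a₀ := by rw [ha₀, star_inv₀, neg_mul]
    have huca : u = u₀ := by
      have hE00' : A 0 0 = A 1 1 * u := by rw [hE11, hE00x, smul_mul_assoc]
      rw [hu₀, hE00', inv_mul_cancel_left₀ hδ]
    simp only [Prod.mk.injEq]
    exact ⟨hwca, haca, huca⟩
end
end
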